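/- Let h ∈ 𝒜 be such that ∫_{ℝ^d} |h(x)|^{2n} dx = ∫_{ℝ^d} |h(x)|² dx for every integer n ≥ 1. Then |h(x)| ∈ {0,1} for almost every x ∈ ℝ^d; that is, |h| coincides almost everywhere with the indicator function of its support. (This is the content of Lemma 9 of the paper: if Γ₂(T) is an isometry then |T(χ_I)| = 1 a.e. on the support of T(χ_I).) -/

import Mathlib

open MeasureTheory Complex Finset
open scoped Nat ENNReal

noncomputable section

/-- The domain `ℝ^d`. -/
abbrev Dom (d : ℕ) := Fin d → ℝ

/-- Membership in `𝒜 = L²(ℝ^d) ∩ L^∞(ℝ^d)`. -/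
def MemA (d : ℕ) (f : Dom d → ℂ) : Prop :=
  MemLp f 2 (volume : Measure (Dom d)) ∧ MemLp f ⊤ (volume : Measure (Dom d))

/-- `⟨f^k, g^k⟩`, the power inner products. -/
def pip (d : ℕ) (f g : Dom d → ℂ) (k : ℕ) : ℂ :=
  ∫ x : Dom d, (starRingEnd ℂ) (f x) ^ k * g x ^ k

/-- `S_n(f,g)`, the inner product of quadratic `n`-particle vectors. -/
def Sker (c : ℝ) (d : ℕ) (f g : Dom d → ℂ) (n : ℕ) : ℂ :=
  ∑ p : Nat.Partition n,
    (n ! : ℂ) ^ 2 * 2 ^ (2 * n - 1) *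
      ∏ j ∈ p.parts.toFinset,
        (c : ℂ) ^ p.parts.count j /
            (((p.parts.count j)! : ℂ) * (j : ℂ) ^ p.parts.count j) *
          pip d f g j ^ p.parts.count j

/-- `K(f,g) = ⟨Ψ(f),Ψ(g)⟩`, the inner product of quadratic exponential vectors. -/
def Kker (c : ℝ) (d : ℕ) (f g : Dom d → ℂ) : ℂ :=
  Complex.exp (-(c / 2 : ℂ) *
    ∫ x : Dom d, Complex.log (1 - 4 * (starRingEnd ℂ) (f x) * g x))

/-! For `u = |h|²` the hypothesis gives `∫ u³ = ∫ u² = ∫ u`, hence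
`∫ u (u - 1)² = ∫ u³ - 2 ∫ u² + ∫ u = 0`. The integrand is nonnegative, so it vanishes almost
everywhere, i.e. `u ∈ {0, 1}` almost everywhere. Boundedness of `h` is what makes the powers
`|h|⁴` and `|h|⁶` integrable. -/

section

variable {α E : Type*} [MeasurableSpace α] {μ : Measure α} [NormedAddCommGroup E]

theorem integrable_norm_pow_of_memLp_two_of_memLp_top {f : α → E} (h2 : MemLp f 2 μ)
    (htop : MemLp f ∞ μ) {n : ℕ} (hn : 2 ≤ n) : Integrable (fun x => ‖f x‖ ^ n) μ := by
  obtain ⟨k, rfl⟩ := Nat.exists_eq_add_of_le' hn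
  have hsq : Integrable (fun x => ‖f x‖ ^ 2) μ :=
    (memLp_two_iff_integrable_sq_norm h2.1).1 h2
  simp_rw [pow_add]
  refine hsq.bdd_mul (c := lpNorm f ∞ μ ^ k) (htop.1.norm.pow k) ?_
  filter_upwards [ae_le_lpNorm_exponent_top htop] with x hx
  rw [norm_pow, norm_norm]
  exact pow_le_pow_left₀ (norm_nonneg _) hx k

theorem ae_eq_zero_or_one_of_integral_pow_eq_integral {u : α → ℝ} (hu : 0 ≤ᵐ[μ] u)
    (hu1 : Integrable u μ) (hu2 : Integrable (fun x => u x ^ 2) μ)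
    (hu3 : Integrable (fun x => u x ^ 3) μ)
    (h2 : ∫ x, u x ^ 2 ∂μ = ∫ x, u x ∂μ) (h3 : ∫ x, u x ^ 3 ∂μ = ∫ x, u x ∂μ) :
    ∀ᵐ x ∂μ, u x = 0 ∨ u x = 1 := by
  have hexpand : (fun x => u x * (u x - 1) ^ 2) = fun x => u x ^ 3 - 2 * u x ^ 2 + u x := by
    funext x; ring
  have hu32 : Integrable (fun x => u x ^ 3 - 2 * u x ^ 2) μ := hu3.sub (hu2.const_mul 2)
  have hint : Integrable (fun x => u x * (u x - 1) ^ 2) μ := by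
    rw [hexpand]; exact hu32.add hu1
  have hzero : ∫ x, u x * (u x - 1) ^ 2 ∂μ = 0 := by
    rw [hexpand, integral_add hu32 hu1, integral_sub hu3 (hu2.const_mul 2), integral_const_mul,
      h2, h3]
    ring
  have hnonneg : 0 ≤ᵐ[μ] fun x => u x * (u x - 1) ^ 2 := by
    filter_upwards [hu] with x hx
    exact mul_nonneg hx (sq_nonneg _)
  filter_upwards [(integral_eq_zero_iff_of_nonneg_ae hnonneg hint).1 hzero] with x hx
  rcases mul_eq_zero.1 hx with hx | hx
  · exact Or.inl hx
  · exact Or.inr (sub_eq_zero.1 (pow_eq_zero_iff two_ne_zero |>.1 hx))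

end

theorem norm_eq_indicator_of_norm_eq_zero_or_one {α E : Type*} [NormedAddCommGroup E]
    {f : α → E} {x : α} (hx : ‖f x‖ = 0 ∨ ‖f x‖ = 1) : ‖f x‖ = {y | f y ≠ 0}.indicator (fun _ => (1 : ℝ)) x := by
  rcases hx with hx | hx
  · simp [norm_eq_zero.1 hx]
  · have hne : f x ≠ 0 := by
      rintro h0
      simp [h0] at hx
    simp [hne, hx]

theorem statement10 (d : ℕ)
    (h : Dom d → ℂ) (hh : MemA d h)
    (hint : ∀ n : ℕ, 1 ≤ n →
      ∫ x : Dom d, ‖h x‖ ^ (2 * n) = ∫ x : Dom d, ‖h x‖ ^ 2) :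
    (∀ᵐ x ∂(volume : Measure (Dom d)), ‖h x‖ = 0 ∨ ‖h x‖ = 1) ∧
    (fun x => ‖h x‖) =ᵐ[(volume : Measure (Dom d))]
      Set.indicator {x | h x ≠ 0} (fun _ => (1 : ℝ)) := by
  have hpow (n : ℕ) (hn : 1 ≤ n) : Integrable (fun x => (‖h x‖ ^ 2) ^ n) := by
    simpa only [← pow_mul] using
      integrable_norm_pow_of_memLp_two_of_memLp_top hh.1 hh.2 (n := 2 * n) (by omega)
  have hsq : ∀ᵐ x, ‖h x‖ ^ 2 = 0 ∨ ‖h x‖ ^ 2 = 1 :=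
    ae_eq_zero_or_one_of_integral_pow_eq_integral (ae_of_all _ fun x => by positivity)
      (by simpa using hpow 1 le_rfl) (hpow 2 (by norm_num)) (hpow 3 (by norm_num))
      (by simpa only [← pow_mul] using hint 2 (by norm_num))
      (by simpa only [← pow_mul] using hint 3 (by norm_num))
  have hnorm : ∀ᵐ x, ‖h x‖ = 0 ∨ ‖h x‖ = 1 := by
    filter_upwards [hsq] with x hx
    rwa [pow_eq_zero_iff two_ne_zero, pow_eq_one_iff_of_nonneg (norm_nonneg _) two_ne_zero] at hx
  exact ⟨hnorm, hnorm.mono fun x hx => norm_eq_indicator_of_norm_eq_zero_or_one hx⟩
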